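/- Let σ₁², …, σ_n² > 0 be fixed, μ₁, …, μ_n ∈ ℝ fixed, and for each i draw independently Z_i ~ N(μ_i, σ_i²) and S_i² ~ (σ_i²/ν)·χ²_ν (independent of Z_i). Let H₀ = {i : μ_i = 0} and define the compound p-value P_σ(z, s²) = Σ_{j=1}^n 2(1-Φ(|z|/σ_j)) p(s² | σ_j²) / Σ_{j=1}^n p(s² | σ_j²), where p(·|σ²) is the scaled chi-squared density with ν degrees of freedom. Then for every t ∈ [0,1]: (1/n) Σ_{i ∈ H₀} ℙ[P_σ(Z_i, S_i²) ≤ t] ≤ t. -/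

import Mathlib

open MeasureTheory ProbabilityTheory

/-- Standard normal CDF `Φ`. -/
noncomputable def stdNormalCDF (x : ℝ) : ℝ :=
  (gaussianReal 0 1 (Set.Iic x)).toReal

/-- Scaled chi-squared likelihood of the sample variance `s²` given variance `σ² = v`:
the density of `(v/ν) χ²_ν` at `s²`. -/
noncomputable def sampleVarLik (ν v s2 : ℝ) : ℝ :=
  ν ^ (ν / 2) / (v ^ (ν / 2) * 2 ^ (ν / 2) * Real.Gamma (ν / 2)) *
    s2 ^ (ν / 2 - 1) * Real.exp (-(ν * s2) / (2 * v))

/-- The oracle compound p-value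
`P_σ(z, s²) = Σⱼ 2(1-Φ(|z|/σⱼ)) p(s²|σⱼ²) / Σⱼ p(s²|σⱼ²)`. -/
noncomputable def compoundPValue {n : ℕ} (ν : ℝ) (σ2 : Fin n → ℝ) (z s2 : ℝ) : ℝ :=
  (∑ j, 2 * (1 - stdNormalCDF (|z| / Real.sqrt (σ2 j))) * sampleVarLik ν (σ2 j) s2) /
    (∑ j, sampleVarLik ν (σ2 j) s2)

open scoped NNReal ENNReal

section AuxLemmas

lemma stdNormalCDF_mono : Monotone stdNormalCDF := fun _ _ hab =>
  ENNReal.toReal_mono (measure_ne_top _ _) (measure_mono (Set.Iic_subset_Iic.mpr hab))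

lemma measurable_stdNormalCDF : Measurable stdNormalCDF := stdNormalCDF_mono.measurable

lemma stdNormalCDF_nonneg (x : ℝ) : 0 ≤ stdNormalCDF x := ENNReal.toReal_nonneg

lemma stdNormalCDF_le_one (x : ℝ) : stdNormalCDF x ≤ 1 := by
  unfold stdNormalCDF
  refine ENNReal.toReal_le_of_le_ofReal zero_le_one ?_
  rw [ENNReal.ofReal_one]
  exact prob_le_one

lemma gaussianPDFReal_std_le_one (x : ℝ) : gaussianPDFReal 0 1 x ≤ 1 := by
  rw [gaussianPDFReal]
  simp only [NNReal.coe_one, mul_one, sub_zero]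
  have h1 : Real.exp (-x ^ 2 / 2) ≤ 1 := by
    rw [Real.exp_le_one_iff]
    have h0 : (0:ℝ) ≤ x ^ 2 := sq_nonneg _
    apply div_nonpos_of_nonpos_of_nonneg <;> nlinarith
  have h2 : (Real.sqrt (2 * Real.pi))⁻¹ ≤ 1 := by
    rw [inv_le_one_iff₀]
    right
    refine Real.one_le_sqrt.mpr ?_
    nlinarith [Real.pi_gt_three]
  calc (Real.sqrt (2 * Real.pi))⁻¹ * Real.exp (-x ^ 2 / 2)
      ≤ 1 * 1 := mul_le_mul h2 h1 (Real.exp_nonneg _) zero_le_one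
    _ = 1 := by norm_num

lemma stdNormalCDF_sub_le {a b : ℝ} (h : a ≤ b) : stdNormalCDF b - stdNormalCDF a ≤ b - a := by
  have hmeas : gaussianReal 0 1 (Set.Iic b)
      = gaussianReal 0 1 (Set.Iic a) + gaussianReal 0 1 (Set.Ioc a b) := by
    rw [← measure_union (Set.Iic_disjoint_Ioc le_rfl) measurableSet_Ioc, Set.Iic_union_Ioc_eq_Iic h]
  have hIoc : gaussianReal 0 1 (Set.Ioc a b) ≤ ENNReal.ofReal (b - a) := by
    rw [gaussianReal_apply_eq_integral 0 one_ne_zero]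
    refine ENNReal.ofReal_le_ofReal ?_
    have hint : ∫ x in Set.Ioc a b, gaussianPDFReal 0 1 x ≤ ∫ x in Set.Ioc a b, (1:ℝ) := by
      refine setIntegral_mono_on ((integrable_gaussianPDFReal 0 1).restrict)
        ((integrableOn_const_iff).mpr (Or.inr ?_)) measurableSet_Ioc (fun x _ => gaussianPDFReal_std_le_one x)
      rw [Real.volume_Ioc]
      exact ENNReal.ofReal_lt_top
    calc ∫ x in Set.Ioc a b, gaussianPDFReal 0 1 x ≤ ∫ x in Set.Ioc a b, (1:ℝ) := hint
      _ = b - a := by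
          simp [Real.volume_Ioc, ENNReal.toReal_ofReal (sub_nonneg.mpr h), h]
  have hfin : (gaussianReal 0 1 (Set.Ioc a b)).toReal ≤ b - a :=
    ENNReal.toReal_le_of_le_ofReal (sub_nonneg.mpr h) hIoc
  have hadd := ENNReal.toReal_add (measure_ne_top (gaussianReal 0 1) (Set.Iic a))
    (measure_ne_top (gaussianReal 0 1) (Set.Ioc a b))
  unfold stdNormalCDF
  rw [hmeas, hadd]
  linarith

lemma continuous_stdNormalCDF : Continuous stdNormalCDF := by
  have key : ∀ x y : ℝ, x ≤ y → dist (stdNormalCDF x) (stdNormalCDF y) ≤ dist x y := by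
    intro x y h
    rw [Real.dist_eq, Real.dist_eq, abs_sub_comm,
      abs_of_nonneg (sub_nonneg.mpr (stdNormalCDF_mono h)),
      abs_sub_comm x y, abs_of_nonneg (sub_nonneg.mpr h)]
    exact stdNormalCDF_sub_le h
  have hlip : LipschitzWith 1 stdNormalCDF := by
    refine LipschitzWith.of_dist_le_mul (fun x y => ?_)
    rw [NNReal.coe_one, one_mul]
    rcases le_total x y with h | h
    · exact key x y h
    · rw [dist_comm, dist_comm x y]
      exact key y x h
  exact hlip.continuous

lemma gaussianReal_atom {v : ℝ≥0} (hv : v ≠ 0) (m c : ℝ) : gaussianReal m v {c} = 0 :=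
  gaussianReal_absolutelyContinuous m hv (by simp)

lemma gaussianReal_Ici_toReal {v : ℝ≥0} (hv : v ≠ 0) (c : ℝ) :
    (gaussianReal 0 v (Set.Ici c)).toReal = 1 - (gaussianReal 0 v (Set.Iic c)).toReal := by
  have h1 : gaussianReal 0 v (Set.Iic c) + gaussianReal 0 v (Set.Ioi c) = 1 := by
    rw [← measure_union (Set.Iic_disjoint_Ioi le_rfl) measurableSet_Ioi, Set.Iic_union_Ioi,
      measure_univ]
  have h2 : gaussianReal 0 v (Set.Ici c) = gaussianReal 0 v (Set.Ioi c) := by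
    have hset : Set.Ici c = {c} ∪ Set.Ioi c := by
      ext x
      simp only [Set.mem_Ici, Set.mem_union, Set.mem_Ioi, Set.mem_singleton_iff]
      constructor
      · intro h
        rcases lt_or_eq_of_le h with h' | h'
        · exact Or.inr h'
        · exact Or.inl h'.symm
      · rintro (rfl | h)
        · exact le_rfl
        · exact h.le
    rw [hset]
    refine le_antisymm ?_ (measure_mono Set.subset_union_right)
    calc gaussianReal 0 v ({c} ∪ Set.Ioi c)
        ≤ gaussianReal 0 v {c} + gaussianReal 0 v (Set.Ioi c) := measure_union_le _ _
      _ = gaussianReal 0 v (Set.Ioi c) := by rw [gaussianReal_atom hv 0 c, zero_add]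
  have h3 := congrArg ENNReal.toReal h1
  rw [ENNReal.toReal_add (measure_ne_top _ _) (measure_ne_top _ _), ENNReal.toReal_one] at h3
  rw [h2]
  linarith

lemma stdNormalCDF_neg (x : ℝ) : stdNormalCDF (-x) = 1 - stdNormalCDF x := by
  have hmap : (gaussianReal 0 1).map (fun y : ℝ => -1 * y) = gaussianReal 0 1 := by
    rw [gaussianReal_map_const_mul (-1)]
    have h1 : (NNReal.mk ((-1:ℝ)^2) (sq_nonneg _) : ℝ≥0) * 1 = 1 := by
      ext; norm_num
    rw [h1]
    norm_num
  have hIic : gaussianReal 0 1 (Set.Iic (-x)) = gaussianReal 0 1 (Set.Ici x) := by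
    conv_lhs => rw [← hmap]
    rw [Measure.map_apply (by fun_prop) measurableSet_Iic]
    congr 1
    ext y
    simp only [Set.mem_preimage, Set.mem_Iic, Set.mem_Ici, neg_one_mul, neg_le_neg_iff]
  unfold stdNormalCDF
  rw [hIic, gaussianReal_Ici_toReal one_ne_zero]

lemma gaussianReal_Iic_scale {v : ℝ} (hv : 0 < v) (a : ℝ) :
    gaussianReal 0 v.toNNReal (Set.Iic a) = ENNReal.ofReal (stdNormalCDF (a / Real.sqrt v)) := by
  have hmap : (gaussianReal 0 1).map (fun y : ℝ => Real.sqrt v * y) = gaussianReal 0 v.toNNReal := by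
    rw [gaussianReal_map_const_mul (Real.sqrt v)]
    have h1 : (NNReal.mk (Real.sqrt v ^ 2) (sq_nonneg _) : ℝ≥0) * 1 = v.toNNReal := by
      ext
      simp [Real.sq_sqrt hv.le, Real.coe_toNNReal v hv.le]
    rw [h1, mul_zero]
  rw [← hmap, Measure.map_apply (by fun_prop) measurableSet_Iic]
  have hpre : (fun y : ℝ => Real.sqrt v * y) ⁻¹' Set.Iic a = Set.Iic (a / Real.sqrt v) := by
    ext y
    simp only [Set.mem_preimage, Set.mem_Iic]
    rw [mul_comm, ← le_div_iff₀ (Real.sqrt_pos.mpr hv)]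
  rw [hpre]
  exact (ENNReal.ofReal_toReal (measure_ne_top _ _)).symm

lemma gaussian_abs_tail {v c : ℝ} (hv : 0 < v) (hc : 0 ≤ c) :
    gaussianReal 0 v.toNNReal {z : ℝ | c ≤ |z|}
      ≤ ENNReal.ofReal (2 * (1 - stdNormalCDF (c / Real.sqrt v))) := by
  have hvne : v.toNNReal ≠ 0 := by
    simp only [ne_eq, Real.toNNReal_eq_zero, not_le]
    exact hv
  set Φc := stdNormalCDF (c / Real.sqrt v) with hΦc
  have hΦ1 : Φc ≤ 1 := stdNormalCDF_le_one _
  have hΦ0 : 0 ≤ Φc := stdNormalCDF_nonneg _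
  have hsub : {z : ℝ | c ≤ |z|} ⊆ Set.Iic (-c) ∪ Set.Ici c := by
    intro z hz
    simp only [Set.mem_setOf_eq] at hz
    rcases abs_cases z with ⟨h1, _⟩ | ⟨h1, _⟩
    · rw [h1] at hz
      exact Or.inr hz
    · rw [h1] at hz
      exact Or.inl (by simpa using (by linarith : z ≤ -c))
  have hIic : gaussianReal 0 v.toNNReal (Set.Iic (-c)) = ENNReal.ofReal (1 - Φc) := by
    rw [gaussianReal_Iic_scale hv, hΦc]
    congr 1
    rw [← stdNormalCDF_neg, neg_div]
  have hIci : gaussianReal 0 v.toNNReal (Set.Ici c) ≤ ENNReal.ofReal (1 - Φc) := by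
    have h1 := gaussianReal_Ici_toReal hvne c
    have h2 : (gaussianReal 0 v.toNNReal (Set.Iic c)).toReal = Φc := by
      rw [gaussianReal_Iic_scale hv, ENNReal.toReal_ofReal hΦ0]
    rw [← ENNReal.ofReal_toReal (measure_ne_top (gaussianReal 0 v.toNNReal) (Set.Ici c)), h1, h2]
  calc gaussianReal 0 v.toNNReal {z : ℝ | c ≤ |z|}
      ≤ gaussianReal 0 v.toNNReal (Set.Iic (-c) ∪ Set.Ici c) := measure_mono hsub
    _ ≤ gaussianReal 0 v.toNNReal (Set.Iic (-c)) + gaussianReal 0 v.toNNReal (Set.Ici c) :=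
        measure_union_le _ _
    _ ≤ ENNReal.ofReal (1 - Φc) + ENNReal.ofReal (1 - Φc) := add_le_add hIic.le hIci
    _ = ENNReal.ofReal (2 * (1 - Φc)) := by
        rw [← ENNReal.ofReal_add (by linarith) (by linarith), two_mul]

lemma sampleVarLik_pos {ν v s : ℝ} (hν : 0 < ν) (hv : 0 < v) (hs : 0 < s) :
    0 < sampleVarLik ν v s := by
  unfold sampleVarLik
  have h1 : 0 < Real.Gamma (ν / 2) := Real.Gamma_pos_of_pos (by linarith)
  positivity

lemma sampleVarLik_eq {ν v s : ℝ} (hν : 0 < ν) (hv : 0 < v) (hs : 0 ≤ s) :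
    gammaPDFReal (ν / 2) (ν / (2 * v)) s = sampleVarLik ν v s := by
  unfold gammaPDFReal sampleVarLik
  rw [if_pos hs]
  have h2v : (0:ℝ) < 2 * v := by linarith
  rw [Real.div_rpow hν.le h2v.le, Real.mul_rpow (by norm_num : (0:ℝ) ≤ 2) hv.le]
  have harg : -(ν / (2 * v) * s) = -(ν * s) / (2 * v) := by
    field_simp
  rw [harg]
  ring_nf

lemma measurable_sampleVarLik {ν : ℝ} (hν : 2 ≤ ν) (v : ℝ) : Measurable (sampleVarLik ν v) := by
  unfold sampleVarLik
  have h1 : Measurable fun s : ℝ => s ^ (ν / 2 - 1) :=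
    (Real.continuous_rpow_const (by linarith)).measurable
  have h2 : Measurable fun s : ℝ => Real.exp (-(ν * s) / (2 * v)) :=
    Real.measurable_exp.comp (((measurable_id.const_mul ν).neg).div_const (2 * v))
  exact (measurable_const.mul h1).mul h2

lemma measurable_compoundPValue {n : ℕ} {ν : ℝ} (hν : 2 ≤ ν) (σ2 : Fin n → ℝ) :
    Measurable (fun p : ℝ × ℝ => compoundPValue ν σ2 p.1 p.2) := by
  unfold compoundPValue
  have hnum : Measurable fun p : ℝ × ℝ =>
      ∑ j, 2 * (1 - stdNormalCDF (|p.1| / Real.sqrt (σ2 j))) * sampleVarLik ν (σ2 j) p.2 := by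
    refine Finset.measurable_sum _ (fun j _ => ?_)
    exact ((measurable_const.mul (measurable_const.sub
      (measurable_stdNormalCDF.comp (measurable_fst.abs.div_const _)))).mul
      ((measurable_sampleVarLik hν (σ2 j)).comp measurable_snd))
  have hden : Measurable fun p : ℝ × ℝ => ∑ j, sampleVarLik ν (σ2 j) p.2 :=
    Finset.measurable_sum _ (fun j _ => (measurable_sampleVarLik hν (σ2 j)).comp measurable_snd)
  exact hnum.div hden

lemma key_slice {n : ℕ} {ν : ℝ} (hν : 2 ≤ ν) (σ2 : Fin n → ℝ) (hσ2 : ∀ i, 0 < σ2 i)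
    {t s : ℝ} (ht0 : 0 ≤ t) (hs : 0 < s) :
    ∑ i : Fin n, gammaPDF (ν / 2) (ν / (2 * σ2 i)) s *
        gaussianReal 0 (σ2 i).toNNReal {z : ℝ | compoundPValue ν σ2 z s ≤ t}
      ≤ ENNReal.ofReal t * ∑ i : Fin n, gammaPDF (ν / 2) (ν / (2 * σ2 i)) s := by
  rcases isEmpty_or_nonempty (Fin n) with hempty | hne
  · simp
  have hν0 : (0:ℝ) < ν := by linarith
  set L : Fin n → ℝ := fun j => sampleVarLik ν (σ2 j) s with hL_def
  have hL : ∀ j, 0 < L j := fun j => sampleVarLik_pos hν0 (hσ2 j) hs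
  have hpdf : ∀ i, gammaPDF (ν / 2) (ν / (2 * σ2 i)) s = ENNReal.ofReal (L i) := by
    intro i
    rw [gammaPDF]
    rw [sampleVarLik_eq hν0 (hσ2 i) hs.le]
  set D : ℝ := ∑ j, L j with hD_def
  have hD : 0 < D := Finset.sum_pos (fun j _ => hL j) Finset.univ_nonempty
  set F : ℝ → ℝ := fun x => ∑ j, 2 * (1 - stdNormalCDF (x / Real.sqrt (σ2 j))) * L j with hF_def
  have hFcont : Continuous F := by
    refine continuous_finset_sum _ (fun j _ => ?_)
    exact ((continuous_const.mul (continuous_const.sub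
      (continuous_stdNormalCDF.comp (continuous_id.div_const _)))).mul continuous_const)
  have hslice : {z : ℝ | compoundPValue ν σ2 z s ≤ t} = {z : ℝ | F |z| ≤ t * D} := by
    ext z
    simp only [Set.mem_setOf_eq, compoundPValue]
    rw [div_le_iff₀ hD]
  set S : Set ℝ := {x : ℝ | 0 ≤ x ∧ F x ≤ t * D} with hS_def
  by_cases hSne : S.Nonempty
  · set c : ℝ := sInf S with hc_def
    have hSclosed : IsClosed S := by
      have : S = Set.Ici 0 ∩ F ⁻¹' Set.Iic (t * D) := by
        ext x; simp [hS_def, Set.mem_setOf_eq]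
      rw [this]
      exact isClosed_Ici.inter (isClosed_Iic.preimage hFcont)
    have hSbdd : BddBelow S := ⟨0, fun x hx => hx.1⟩
    have hcS : c ∈ S := hSclosed.csInf_mem hSne hSbdd
    have hsub : {z : ℝ | F |z| ≤ t * D} ⊆ {z : ℝ | c ≤ |z|} := by
      intro z hz
      exact csInf_le hSbdd ⟨abs_nonneg z, hz⟩
    have hbound : ∀ i, gaussianReal 0 (σ2 i).toNNReal {z : ℝ | compoundPValue ν σ2 z s ≤ t}
        ≤ ENNReal.ofReal (2 * (1 - stdNormalCDF (c / Real.sqrt (σ2 i)))) := by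
      intro i
      rw [hslice]
      exact (measure_mono hsub).trans (gaussian_abs_tail (hσ2 i) hcS.1)
    calc ∑ i : Fin n, gammaPDF (ν / 2) (ν / (2 * σ2 i)) s *
          gaussianReal 0 (σ2 i).toNNReal {z : ℝ | compoundPValue ν σ2 z s ≤ t}
        ≤ ∑ i : Fin n, ENNReal.ofReal (L i) *
            ENNReal.ofReal (2 * (1 - stdNormalCDF (c / Real.sqrt (σ2 i)))) := by
          refine Finset.sum_le_sum (fun i _ => ?_)
          rw [hpdf i]
          exact mul_le_mul_right (hbound i) _
      _ = ENNReal.ofReal (∑ i, 2 * (1 - stdNormalCDF (c / Real.sqrt (σ2 i))) * L i) := by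
          rw [ENNReal.ofReal_sum_of_nonneg]
          · refine Finset.sum_congr rfl (fun i _ => ?_)
            rw [← ENNReal.ofReal_mul (hL i).le, mul_comm]
          · intro i _
            have := stdNormalCDF_le_one (c / Real.sqrt (σ2 i))
            have := (hL i).le
            nlinarith
      _ ≤ ENNReal.ofReal (t * D) := ENNReal.ofReal_le_ofReal hcS.2
      _ = ENNReal.ofReal t * ENNReal.ofReal D := ENNReal.ofReal_mul ht0
      _ = ENNReal.ofReal t * ∑ i : Fin n, gammaPDF (ν / 2) (ν / (2 * σ2 i)) s := by
          congr 1
          rw [hD_def, ENNReal.ofReal_sum_of_nonneg (fun i _ => (hL i).le)]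
          exact Finset.sum_congr rfl (fun i _ => (hpdf i).symm)
  · have hempty : {z : ℝ | compoundPValue ν σ2 z s ≤ t} = ∅ := by
      rw [hslice]
      ext z
      simp only [Set.mem_setOf_eq, Set.mem_empty_iff_false, iff_false]
      intro hz
      exact hSne ⟨|z|, abs_nonneg z, hz⟩
    rw [hempty]
    simp

end AuxLemmas
/-- Average significance control of the oracle compound p-values in the compound setting:
with fixed `σᵢ² > 0` and `μᵢ`, and independent `Zᵢ ~ N(μᵢ, σᵢ²)`, `Sᵢ² ~ (σᵢ²/ν) χ²_ν`,
for every `t ∈ [0,1]`,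
`(1/n) Σ_{i : μᵢ = 0} ℙ[P_σ(Zᵢ, Sᵢ²) ≤ t] ≤ t`. -/

theorem stmt_18 (n : ℕ) (hn : 0 < n) (ν : ℝ) (hν : 2 ≤ ν)
    (σ2 : Fin n → ℝ) (hσ2 : ∀ i, 0 < σ2 i) (μ : Fin n → ℝ)
    (t : ℝ) (ht : t ∈ Set.Icc (0 : ℝ) 1) :
    (1 / (n : ℝ)) *
      ∑ i ∈ Finset.univ.filter (fun i => μ i = 0),
        (((gaussianReal (μ i) (σ2 i).toNNReal).prod
            (gammaMeasure (ν / 2) (ν / (2 * σ2 i))))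
          {p : ℝ × ℝ | compoundPValue ν σ2 p.1 p.2 ≤ t}).toReal ≤ t := by
  obtain ⟨ht0, ht1⟩ := ht
  have hν0 : (0:ℝ) < ν := by linarith
  set A : Set (ℝ × ℝ) := {p : ℝ × ℝ | compoundPValue ν σ2 p.1 p.2 ≤ t} with hA_def
  have hA : MeasurableSet A :=
    measurableSet_le (measurable_compoundPValue hν σ2) measurable_const
  haveI hprob : ∀ i : Fin n, IsProbabilityMeasure (gammaMeasure (ν / 2) (ν / (2 * σ2 i))) :=
    fun i => isProbabilityMeasure_gammaMeasure (by linarith) (by have h := hσ2 i; positivity)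
  -- rewrite each product measure as a lintegral
  have hQ : ∀ i : Fin n,
      ((gaussianReal 0 (σ2 i).toNNReal).prod (gammaMeasure (ν / 2) (ν / (2 * σ2 i)))) A
        = ∫⁻ s, gammaPDF (ν / 2) (ν / (2 * σ2 i)) s *
            gaussianReal 0 (σ2 i).toNNReal ((fun z => (z, s)) ⁻¹' A) := by
    intro i
    rw [Measure.prod_apply_symm hA, gammaMeasure]
    exact lintegral_withDensity_eq_lintegral_mul _
      ((measurable_gammaPDFReal _ _).ennreal_ofReal : Measurable (gammaPDF (ν / 2) (ν / (2 * σ2 i))))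
      (measurable_measure_prodMk_right hA)
  have hg : ∀ i : Fin n, Measurable fun s : ℝ =>
      gaussianReal 0 (σ2 i).toNNReal ((fun z => (z, s)) ⁻¹' A) :=
    fun i => measurable_measure_prodMk_right hA
  have hpdfmeas : ∀ i : Fin n, Measurable fun s : ℝ => gammaPDF (ν / 2) (ν / (2 * σ2 i)) s :=
    fun i => (measurable_gammaPDFReal _ _).ennreal_ofReal
  have hterm : ∀ i : Fin n, Measurable fun s : ℝ =>
      gammaPDF (ν / 2) (ν / (2 * σ2 i)) s *
        gaussianReal 0 (σ2 i).toNNReal ((fun z => (z, s)) ⁻¹' A) :=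
    fun i => (hpdfmeas i).mul (hg i)
  have hae : ∀ᵐ s : ℝ, (∑ i : Fin n, gammaPDF (ν / 2) (ν / (2 * σ2 i)) s *
        gaussianReal 0 (σ2 i).toNNReal ((fun z => (z, s)) ⁻¹' A))
      ≤ ENNReal.ofReal t * ∑ i : Fin n, gammaPDF (ν / 2) (ν / (2 * σ2 i)) s := by
    have hzero : ∀ᵐ s : ℝ, s ≠ (0:ℝ) := by
      refine ae_iff.mpr ?_
      simpa using Real.volume_singleton (a := (0:ℝ))
    filter_upwards [hzero] with s hs0
    rcases lt_trichotomy s 0 with hneg | hzero' | hpos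
    · have : ∀ i : Fin n, gammaPDF (ν / 2) (ν / (2 * σ2 i)) s = 0 :=
        fun i => gammaPDF_of_neg hneg
      simp [this]
    · exact absurd hzero' hs0
    · exact key_slice hν σ2 hσ2 ht0 hpos
  have main : (∑ i : Fin n,
      ((gaussianReal 0 (σ2 i).toNNReal).prod (gammaMeasure (ν / 2) (ν / (2 * σ2 i)))) A)
      ≤ ENNReal.ofReal t * n := by
    calc ∑ i : Fin n,
        ((gaussianReal 0 (σ2 i).toNNReal).prod (gammaMeasure (ν / 2) (ν / (2 * σ2 i)))) A
        = ∑ i : Fin n, ∫⁻ s, gammaPDF (ν / 2) (ν / (2 * σ2 i)) s *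
            gaussianReal 0 (σ2 i).toNNReal ((fun z => (z, s)) ⁻¹' A) :=
          Finset.sum_congr rfl (fun i _ => hQ i)
      _ = ∫⁻ s, ∑ i : Fin n, gammaPDF (ν / 2) (ν / (2 * σ2 i)) s *
            gaussianReal 0 (σ2 i).toNNReal ((fun z => (z, s)) ⁻¹' A) :=
          (lintegral_finset_sum _ (fun i _ => hterm i)).symm
      _ ≤ ∫⁻ s, ENNReal.ofReal t * ∑ i : Fin n, gammaPDF (ν / 2) (ν / (2 * σ2 i)) s :=
          lintegral_mono_ae hae
      _ = ENNReal.ofReal t * ∑ i : Fin n, ∫⁻ s, gammaPDF (ν / 2) (ν / (2 * σ2 i)) s := by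
          rw [lintegral_const_mul _ (Finset.measurable_sum _ (fun i _ => hpdfmeas i)),
            lintegral_finset_sum _ (fun i _ => hpdfmeas i)]
      _ = ENNReal.ofReal t * n := by
          have h1 : ∀ i : Fin n, ∫⁻ s, gammaPDF (ν / 2) (ν / (2 * σ2 i)) s = 1 :=
            fun i => lintegral_gammaPDF_eq_one (by linarith) (by have h := hσ2 i; positivity)
          simp [h1]
  -- pass to reals
  have hsum2 : ∑ i : Fin n,
      (((gaussianReal 0 (σ2 i).toNNReal).prod (gammaMeasure (ν / 2) (ν / (2 * σ2 i)))) A).toReal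
      ≤ t * n := by
    rw [← ENNReal.toReal_sum (fun i _ => measure_ne_top _ _)]
    have hfin : ENNReal.ofReal t * (n : ℝ≥0∞) ≠ ⊤ :=
      ENNReal.mul_ne_top ENNReal.ofReal_ne_top (ENNReal.natCast_ne_top n)
    calc (∑ i : Fin n,
        ((gaussianReal 0 (σ2 i).toNNReal).prod (gammaMeasure (ν / 2) (ν / (2 * σ2 i)))) A).toReal
        ≤ (ENNReal.ofReal t * n).toReal := ENNReal.toReal_mono hfin main
      _ = t * n := by
          rw [ENNReal.toReal_mul, ENNReal.toReal_ofReal ht0]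
          simp
  have hsum1 : ∑ i ∈ Finset.univ.filter (fun i => μ i = 0),
      (((gaussianReal (μ i) (σ2 i).toNNReal).prod (gammaMeasure (ν / 2) (ν / (2 * σ2 i)))) A).toReal
      ≤ ∑ i : Fin n,
      (((gaussianReal 0 (σ2 i).toNNReal).prod (gammaMeasure (ν / 2) (ν / (2 * σ2 i)))) A).toReal := by
    rw [Finset.sum_congr rfl (fun i hi => by
      rw [(Finset.mem_filter.mp hi).2])]
    exact Finset.sum_le_sum_of_subset_of_nonneg (Finset.subset_univ _)
      (fun i _ _ => ENNReal.toReal_nonneg)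
  have hn' : (0:ℝ) < n := Nat.cast_pos.mpr hn
  have := hsum1.trans hsum2
  calc (1 / (n : ℝ)) * ∑ i ∈ Finset.univ.filter (fun i => μ i = 0),
        (((gaussianReal (μ i) (σ2 i).toNNReal).prod (gammaMeasure (ν / 2) (ν / (2 * σ2 i)))) A).toReal
      ≤ (1 / (n : ℝ)) * (t * n) := by
        refine mul_le_mul_of_nonneg_left this (by positivity)
    _ = t := by field_simp
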